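/- arXiv:2604.19481 — 3 statements merged into one kernel-verified Lean document; each statement's English description precedes it below -/
import Mathlib

section
/- Let ψ = c₀|0⟩ + c₁|1⟩ ∈ ℂ² and define the two-qubit state |η⟩ = c₀ |0⟩ ⊗ (SH|0⟩) + e^{iπ/4} c₁ |1⟩ ⊗ (SH|1⟩) ∈ ℂ²⊗ℂ². Then projecting the second qubit onto the X basis gives: (I ⊗ ⟨+|)|η⟩ = ((1+i)/2) · T†ψ, and (I ⊗ ⟨−|)|η⟩ = ((1−i)/2) · Z T† ψ. Hence measuring the second qubit in the X basis, followed by a Z correction on the first qubit conditioned on the outcome −, leaves the first qubit in the state T†ψ up to a nonzero scalar independent of ψ. -/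
/-!
Write `ω = e^{iπ/4}`. Since `SH|0⟩ = (|0⟩ + i|1⟩)/√2` and `SH|1⟩ = (|0⟩ - i|1⟩)/√2`,
`⟨±|SH|a⟩ = (1 ± (-1)^a i)/2`, so contracting the second qubit of `η` with `⟨±|`
only rescales the two amplitudes of `ψ`. These rescalings are those of `T†` and `ZT†`, up to a
common factor, because `ω² = i`, i.e. `ω(1 - i) = (1 + i)ω⁻¹` and `ω(1 + i) = -(1 - i)ω⁻¹`.
-/

open Matrix

noncomputable section

/-- The computational basis state `|a⟩` of a qubit `ℂ²`. -/
def ket (a : Fin 2) : Fin 2 → ℂ := fun b => if b = a then 1 else 0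

/-- Tensor (Kronecker) product of two single-qubit state vectors, as a vector of
`ℂ² ⊗ ℂ² ≅ ℂ⁴`. -/
def tensorVec (ψ φ : Fin 2 → ℂ) : Fin 2 × Fin 2 → ℂ := fun p => ψ p.1 * φ p.2

/-- The Pauli `Z` gate. -/
def gateZ : Matrix (Fin 2) (Fin 2) ℂ := !![1, 0; 0, -1]

/-- The phase gate `S = diag(1, i)`. -/
def gateS : Matrix (Fin 2) (Fin 2) ℂ := !![1, 0; 0, Complex.I]

/-- The Hadamard gate `H`. -/
def gateH : Matrix (Fin 2) (Fin 2) ℂ := (Real.sqrt 2 : ℂ)⁻¹ • !![1, 1; 1, -1]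

/-- The gate `T† = diag(1, e^{−iπ/4})`. -/
def gateTdag : Matrix (Fin 2) (Fin 2) ℂ :=
  !![1, 0; 0, Complex.exp (-(Real.pi * Complex.I / 4))]

/-- The X-basis state `|+⟩ = (|0⟩+|1⟩)/√2`. -/
def ketPlus : Fin 2 → ℂ := fun _ => (Real.sqrt 2 : ℂ)⁻¹

/-- The X-basis state `|−⟩ = (|0⟩−|1⟩)/√2`. -/
def ketMinus : Fin 2 → ℂ := fun b => (Real.sqrt 2 : ℂ)⁻¹ * (-1 : ℂ) ^ (b : ℕ)

/-- Applying the bra `⟨φ|` to the second tensor factor of a two-qubit state: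
`(I ⊗ ⟨φ|) v`. -/
def braSecond (φ : Fin 2 → ℂ) (v : Fin 2 × Fin 2 → ℂ) : Fin 2 → ℂ :=
  fun a => ∑ b : Fin 2, (starRingEnd ℂ) (φ b) * v (a, b)

open Complex
open scoped Real

lemma braSecond_add (φ : Fin 2 → ℂ) (v w : Fin 2 × Fin 2 → ℂ) :
    braSecond φ (v + w) = braSecond φ v + braSecond φ w := by
  ext a
  simp only [braSecond, Pi.add_apply, mul_add, Finset.sum_add_distrib]

lemma braSecond_smul (φ : Fin 2 → ℂ) (c : ℂ) (v : Fin 2 × Fin 2 → ℂ) :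
    braSecond φ (c • v) = c • braSecond φ v := by
  ext a
  simp only [braSecond, Pi.smul_apply, smul_eq_mul, Finset.mul_sum]
  exact Finset.sum_congr rfl fun _ _ => mul_left_comm _ _ _

lemma braSecond_tensorVec (φ ψ χ : Fin 2 → ℂ) :
    braSecond φ (tensorVec ψ χ) = (star φ ⬝ᵥ χ) • ψ := by
  ext a
  simp only [braSecond, tensorVec, dotProduct, Pi.star_apply, Pi.smul_apply, smul_eq_mul,
    Finset.sum_mul, RCLike.star_def]
  exact Finset.sum_congr rfl fun _ _ => by ring

lemma smul_ket_zero_add_smul_ket_one (a b : ℂ) : a • ket 0 + b • ket 1 = ![a, b] := by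
  ext i
  fin_cases i <;> simp [ket]

lemma braSecond_smul_tensorVec_ket_add (φ v₀ v₁ : Fin 2 → ℂ) (a b : ℂ) :
    braSecond φ (a • tensorVec (ket 0) v₀ + b • tensorVec (ket 1) v₁) =
      ![a * (star φ ⬝ᵥ v₀), b * (star φ ⬝ᵥ v₁)] := by
  rw [braSecond_add, braSecond_smul, braSecond_smul, braSecond_tensorVec, braSecond_tensorVec,
    smul_smul, smul_smul, smul_ket_zero_add_smul_ket_one]

lemma ofReal_sqrt_two_inv_mul_self : ((√2 : ℝ) : ℂ)⁻¹ * ((√2 : ℝ) : ℂ)⁻¹ = 1 / 2 := by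
  rw [← mul_inv, ← ofReal_mul, Real.mul_self_sqrt zero_le_two]
  norm_num

lemma gateS_mul_gateH_mulVec_ket_zero :
    (gateS * gateH) *ᵥ ket 0 = ((√2 : ℝ) : ℂ)⁻¹ • ![1, I] := by
  ext i
  fin_cases i <;> simp [gateS, gateH, ket, mulVec, dotProduct, Matrix.mul_apply, mul_comm]

lemma gateS_mul_gateH_mulVec_ket_one :
    (gateS * gateH) *ᵥ ket 1 = ((√2 : ℝ) : ℂ)⁻¹ • ![1, -I] := by
  ext i
  fin_cases i <;> simp [gateS, gateH, ket, mulVec, dotProduct, Matrix.mul_apply, mul_comm]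

lemma star_ketPlus_dotProduct (z : ℂ) :
    star ketPlus ⬝ᵥ (((√2 : ℝ) : ℂ)⁻¹ • ![1, z]) = (1 + z) / 2 := by
  simp only [ketPlus, dotProduct, Fin.sum_univ_two, Pi.star_apply, Pi.smul_apply, smul_eq_mul,
    RCLike.star_def, map_inv₀, conj_ofReal, Matrix.cons_val_zero, Matrix.cons_val_one]
  linear_combination (1 + z) * ofReal_sqrt_two_inv_mul_self

lemma star_ketMinus_dotProduct (z : ℂ) :
    star ketMinus ⬝ᵥ (((√2 : ℝ) : ℂ)⁻¹ • ![1, z]) = (1 - z) / 2 := by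
  simp [ketMinus, dotProduct, Fin.sum_univ_two]
  linear_combination (1 - z) * ofReal_sqrt_two_inv_mul_self

lemma gateTdag_mulVec (a b : ℂ) :
    gateTdag *ᵥ ![a, b] = ![a, (cexp (π * I / 4))⁻¹ * b] := by
  ext i
  fin_cases i <;> simp [gateTdag, exp_neg, mul_comm]

lemma gateZ_mulVec (a b : ℂ) : gateZ *ᵥ ![a, b] = ![a, -b] := by
  ext i
  fin_cases i <;> simp [gateZ]

lemma exp_pi_mul_I_div_four_sq : cexp (π * I / 4) ^ 2 = I := by
  rw [← exp_nat_mul]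
  convert exp_pi_div_two_mul_I using 2
  push_cast
  ring

lemma mul_one_sub_I_of_sq_eq_I {ω : ℂ} (h : ω ^ 2 = I) : ω * (1 - I) = (1 + I) * ω⁻¹ := by
  have hω : ω ≠ 0 := by rintro rfl; simp [eq_comm] at h
  field_simp
  linear_combination (1 - I) * h - I_sq

lemma mul_one_add_I_of_sq_eq_I {ω : ℂ} (h : ω ^ 2 = I) : ω * (1 + I) = -((1 - I) * ω⁻¹) := by
  have hω : ω ≠ 0 := by rintro rfl; simp [eq_comm] at h
  field_simp
  linear_combination (1 + I) * h + I_sq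

/-- Let `ψ = c₀|0⟩ + c₁|1⟩ ∈ ℂ²` and define the two-qubit state
`|η⟩ = c₀ |0⟩ ⊗ (SH|0⟩) + e^{iπ/4} c₁ |1⟩ ⊗ (SH|1⟩) ∈ ℂ²⊗ℂ²`.
Then projecting the second qubit onto the X basis gives
`(I ⊗ ⟨+|)|η⟩ = ((1+i)/2) · T†ψ` and `(I ⊗ ⟨−|)|η⟩ = ((1−i)/2) · Z T† ψ`.
Hence measuring the second qubit in the X basis, followed by a `Z` correction on the first
qubit conditioned on the outcome `−`, leaves the first qubit in the state `T†ψ` up to a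
nonzero scalar independent of `ψ`. -/
theorem disentangling_step_of_measurement_based_Tdagger (c₀ c₁ : ℂ) :
    let ψ : Fin 2 → ℂ := ![c₀, c₁]
    let η : Fin 2 × Fin 2 → ℂ :=
      c₀ • tensorVec (ket 0) ((gateS * gateH).mulVec (ket 0)) +
      (Complex.exp (Real.pi * Complex.I / 4) * c₁) •
        tensorVec (ket 1) ((gateS * gateH).mulVec (ket 1))
    braSecond ketPlus η = ((1 + Complex.I) / 2) • gateTdag.mulVec ψ ∧
    braSecond ketMinus η = ((1 - Complex.I) / 2) • gateZ.mulVec (gateTdag.mulVec ψ) := by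
  intro ψ η
  have hω : cexp (π * I / 4) ^ 2 = I := exp_pi_mul_I_div_four_sq
  simp only [η, ψ]
  rw [braSecond_smul_tensorVec_ket_add, braSecond_smul_tensorVec_ket_add,
    gateS_mul_gateH_mulVec_ket_zero, gateS_mul_gateH_mulVec_ket_one,
    star_ketPlus_dotProduct, star_ketPlus_dotProduct, star_ketMinus_dotProduct,
    star_ketMinus_dotProduct, gateTdag_mulVec, gateZ_mulVec, smul_vec2, smul_vec2]
  refine ⟨vec2_eq ?_ ?_, vec2_eq ?_ ?_⟩ <;> simp only [smul_eq_mul]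
  · ring
  · linear_combination c₁ / 2 * mul_one_sub_I_of_sq_eq_I hω
  · ring
  · linear_combination c₁ / 2 * mul_one_add_I_of_sq_eq_I hω
end
end

section
/- Over F₂ = ZMod 2, let x = S_ℓ ⊗ I_m and y = I_ℓ ⊗ S_m, and let A and B each be a finite sum of monomials x^a y^b. Then for every i ∈ {0,…,ℓ−1} and j ∈ {0,…,m−1}, the block-diagonal permutation matrix Q = fromBlocks(x^i y^j, 0, 0, x^i y^j) satisfies [A | B] · Q = x^i y^j · [A | B] and [Bᵀ | Aᵀ] · Q = x^i y^j · [Bᵀ | Aᵀ]. Since left multiplication by the permutation matrix x^i y^j merely permutes rows, the (0,i,j) cyclic shift of the data qubits preserves the row spaces of both check matrices H_X = [A | B] and H_Z = [Bᵀ | Aᵀ], and hence is a logical operation of any bivariate bicycle code. -/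
open Matrix Kronecker

noncomputable section

/-- The `k × k` circulant permutation matrix over `F₂ = ZMod 2` whose first row is
`(0,1,0,…,0)`, i.e. `S_k i j = 1` iff `j = i + 1` (cyclically). -/
def cyc (k : ℕ) [NeZero k] : Matrix (Fin k) (Fin k) (ZMod 2) :=
  fun i j => if j = i + 1 then 1 else 0

/-- `x = S_ℓ ⊗ I_m`. -/
def xMat (ℓ m : ℕ) [NeZero ℓ] [NeZero m] :
    Matrix (Fin ℓ × Fin m) (Fin ℓ × Fin m) (ZMod 2) :=
  cyc ℓ ⊗ₖ (1 : Matrix (Fin m) (Fin m) (ZMod 2))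

/-- `y = I_ℓ ⊗ S_m`. -/
def yMat (ℓ m : ℕ) [NeZero ℓ] [NeZero m] :
    Matrix (Fin ℓ × Fin m) (Fin ℓ × Fin m) (ZMod 2) :=
  (1 : Matrix (Fin ℓ) (Fin ℓ) (ZMod 2)) ⊗ₖ cyc m

/-! The matrices `x` and `y` are the permutation matrices of the translations by `(1, 0)` and
`(0, 1)` of the abelian group `ℤ/ℓ × ℤ/m`, and the transpose of a translation matrix is the
translation matrix of the negative. Hence `x^i y^j`, `A`, `B`, `Aᵀ` and `Bᵀ` are all sums of
translation matrices, which pairwise commute, and both block identities follow. -/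

section Translation

variable (R : Type*) {G : Type*} [AddCommGroup G] [DecidableEq G]

def translationMatrix [Zero R] [One R] (g : G) : Matrix G G R :=
  (Equiv.addRight g).permMatrix R

lemma translationMatrix_apply [Zero R] [One R] (g a b : G) :
    translationMatrix R g a b = if b = a + g then 1 else 0 := by
  simp [translationMatrix, PEquiv.toMatrix_apply, eq_comm]

@[simp]
lemma translationMatrix_zero [Zero R] [One R] : translationMatrix R (0 : G) = 1 := by
  rw [translationMatrix, Equiv.addRight_zero, permMatrix_one]

lemma transpose_translationMatrix [Zero R] [One R] (g : G) :
    (translationMatrix R g)ᵀ = translationMatrix R (-g) := by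
  rw [translationMatrix, transpose_permMatrix, Equiv.neg_addRight, translationMatrix]

lemma translationMatrix_prod [MulZeroOneClass R] {H : Type*} [AddCommGroup H] [DecidableEq H]
    (g : G) (h : H) :
    translationMatrix R (g, h) = translationMatrix R g ⊗ₖ translationMatrix R h := by
  ext ⟨a, b⟩ ⟨c, d⟩
  simp only [kroneckerMap_apply, translationMatrix_apply, ite_zero_mul_ite_zero, mul_one,
    Prod.mk_add_mk, Prod.ext_iff]

variable [Fintype G]

lemma translationMatrix_add [NonAssocSemiring R] (g h : G) :
    translationMatrix R (g + h) = translationMatrix R g * translationMatrix R h := by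
  rw [translationMatrix, Equiv.addRight_add, permMatrix_mul, translationMatrix, translationMatrix]

lemma commute_translationMatrix [NonAssocSemiring R] (g h : G) :
    Commute (translationMatrix R g) (translationMatrix R h) := by
  rw [Commute, SemiconjBy, ← translationMatrix_add, ← translationMatrix_add, add_comm]

lemma translationMatrix_nsmul [Semiring R] (n : ℕ) (g : G) :
    translationMatrix R (n • g) = translationMatrix R g ^ n := by
  induction n with
  | zero => rw [zero_smul, translationMatrix_zero, pow_zero]
  | succ n ih => rw [succ_nsmul, translationMatrix_add, ih, pow_succ]

end Translation

lemma cyc_eq_translationMatrix (k : ℕ) [NeZero k] :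
    cyc k = translationMatrix (ZMod 2) (1 : Fin k) := by
  ext a b
  rw [cyc, translationMatrix_apply]

section BivariateBicycle

variable (ℓ m : ℕ) [NeZero ℓ] [NeZero m]

lemma xMat_eq_translationMatrix :
    xMat ℓ m = translationMatrix (ZMod 2) ((1, 0) : Fin ℓ × Fin m) := by
  rw [xMat, cyc_eq_translationMatrix, ← translationMatrix_zero, translationMatrix_prod]

lemma yMat_eq_translationMatrix :
    yMat ℓ m = translationMatrix (ZMod 2) ((0, 1) : Fin ℓ × Fin m) := by
  rw [yMat, cyc_eq_translationMatrix, ← translationMatrix_zero, translationMatrix_prod]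

lemma xMat_pow_mul_yMat_pow (a b : ℕ) :
    xMat ℓ m ^ a * yMat ℓ m ^ b =
      translationMatrix (ZMod 2) (a • (1 : Fin ℓ), b • (1 : Fin m)) := by
  rw [xMat_eq_translationMatrix, yMat_eq_translationMatrix, ← translationMatrix_nsmul,
    ← translationMatrix_nsmul, ← translationMatrix_add]
  simp

lemma commute_monomial_sum (i j : ℕ) (s : Finset (ℕ × ℕ)) :
    Commute (xMat ℓ m ^ i * yMat ℓ m ^ j)
      (∑ p ∈ s, xMat ℓ m ^ p.1 * yMat ℓ m ^ p.2) := by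
  simp only [xMat_pow_mul_yMat_pow]
  exact Commute.sum_right _ _ _ fun p _ => commute_translationMatrix _ _ _

lemma commute_transpose_monomial_sum (i j : ℕ) (s : Finset (ℕ × ℕ)) :
    Commute (xMat ℓ m ^ i * yMat ℓ m ^ j)
      (∑ p ∈ s, xMat ℓ m ^ p.1 * yMat ℓ m ^ p.2)ᵀ := by
  simp only [xMat_pow_mul_yMat_pow, transpose_sum, transpose_translationMatrix]
  exact Commute.sum_right _ _ _ fun p _ => commute_translationMatrix _ _ _

end BivariateBicycle

lemma fromCols_mul_fromBlocks_of_commute {n R : Type*} [Fintype n] [Semiring R]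
    {P A B : Matrix n n R} (hA : Commute P A) (hB : Commute P B) :
    fromCols A B * fromBlocks P 0 0 P = P * fromCols A B := by
  rw [fromCols_mul_fromBlocks, mul_fromCols, hA.eq, hB.eq]
  simp

theorem cyclic_shift_commutes_with_BB_check_matrices_general
    (ℓ m : ℕ) [NeZero ℓ] [NeZero m]
    (A B : Matrix (Fin ℓ × Fin m) (Fin ℓ × Fin m) (ZMod 2))
    (sA sB : Finset (ℕ × ℕ))
    (hA : A = ∑ p ∈ sA, xMat ℓ m ^ p.1 * yMat ℓ m ^ p.2)
    (hB : B = ∑ p ∈ sB, xMat ℓ m ^ p.1 * yMat ℓ m ^ p.2)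
    (i j : ℕ) :
    Matrix.fromCols A B *
        Matrix.fromBlocks (xMat ℓ m ^ i * yMat ℓ m ^ j) 0 0 (xMat ℓ m ^ i * yMat ℓ m ^ j)
      = (xMat ℓ m ^ i * yMat ℓ m ^ j) * Matrix.fromCols A B ∧
    Matrix.fromCols Bᵀ Aᵀ *
        Matrix.fromBlocks (xMat ℓ m ^ i * yMat ℓ m ^ j) 0 0 (xMat ℓ m ^ i * yMat ℓ m ^ j)
      = (xMat ℓ m ^ i * yMat ℓ m ^ j) * Matrix.fromCols Bᵀ Aᵀ := by
  subst hA hB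
  exact ⟨fromCols_mul_fromBlocks_of_commute (commute_monomial_sum ℓ m i j sA)
      (commute_monomial_sum ℓ m i j sB),
    fromCols_mul_fromBlocks_of_commute (commute_transpose_monomial_sum ℓ m i j sB)
      (commute_transpose_monomial_sum ℓ m i j sA)⟩

/-- Over `F₂ = ZMod 2`, let `x = S_ℓ ⊗ I_m` and `y = I_ℓ ⊗ S_m`, and let `A` and `B` each be
a finite sum of monomials `x^a y^b`.  Then for every `i ∈ {0,…,ℓ−1}` and
`j ∈ {0,…,m−1}`, the block-diagonal permutation matrix
`Q = fromBlocks(x^i y^j, 0, 0, x^i y^j)` satisfies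
`[A | B] · Q = x^i y^j · [A | B]` and `[Bᵀ | Aᵀ] · Q = x^i y^j · [Bᵀ | Aᵀ]`.
(Since left multiplication by the permutation matrix `x^i y^j` merely permutes rows, the
`(0,i,j)` cyclic shift of the data qubits preserves the row spaces of both check matrices
`H_X = [A | B]` and `H_Z = [Bᵀ | Aᵀ]`, and hence is a logical operation of any bivariate
bicycle code.) -/
theorem cyclic_shift_commutes_with_BB_check_matrices
    (ℓ m : ℕ) [NeZero ℓ] [NeZero m]
    (A B : Matrix (Fin ℓ × Fin m) (Fin ℓ × Fin m) (ZMod 2))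
    (sA sB : Finset (ℕ × ℕ))
    (hA : A = ∑ p ∈ sA, xMat ℓ m ^ p.1 * yMat ℓ m ^ p.2)
    (hB : B = ∑ p ∈ sB, xMat ℓ m ^ p.1 * yMat ℓ m ^ p.2)
    (i j : ℕ) (hi : i < ℓ) (hj : j < m) :
    Matrix.fromCols A B *
        Matrix.fromBlocks (xMat ℓ m ^ i * yMat ℓ m ^ j) 0 0 (xMat ℓ m ^ i * yMat ℓ m ^ j)
      = (xMat ℓ m ^ i * yMat ℓ m ^ j) * Matrix.fromCols A B ∧
    Matrix.fromCols Bᵀ Aᵀ *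
        Matrix.fromBlocks (xMat ℓ m ^ i * yMat ℓ m ^ j) 0 0 (xMat ℓ m ^ i * yMat ℓ m ^ j)
      = (xMat ℓ m ^ i * yMat ℓ m ^ j) * Matrix.fromCols Bᵀ Aᵀ :=
  cyclic_shift_commutes_with_BB_check_matrices_general ℓ m A B sA sB hA hB i j
end
end

section
/- Over F₂ = ZMod 2, let x = S_ℓ ⊗ I_m and y = I_ℓ ⊗ S_m, and let A and B each be a finite sum of monomials x^a y^b. Suppose there exist i, j such that the monomial M = x^i y^j satisfies M·A = Bᵀ and M·B = Aᵀ. Then M·[A | B] = [Bᵀ | Aᵀ], and since M is an invertible (permutation) matrix, the F₂-row spaces of H_X = [A | B] and H_Z = [Bᵀ | Aᵀ] coincide. Hence the corresponding bivariate bicycle code is self-orthogonal (its X- and Z-stabilizer spaces are equal). -/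
open Matrix Kronecker

noncomputable section

theorem Matrix.isUnit_permMatrix {n R : Type*} [DecidableEq n] [Fintype n] [CommRing R]
    (σ : Equiv.Perm n) : IsUnit (σ.permMatrix R) := by
  rw [isUnit_iff_isUnit_det, det_permutation]
  exact (Equiv.Perm.sign σ).isUnit.map (Int.castRingHom R)

theorem Matrix.span_range_mul_of_isUnit {m n R : Type*} [Fintype m] [DecidableEq m] [CommRing R]
    {M : Matrix m m R} (hM : IsUnit M) (H : Matrix m n R) :
    Submodule.span R (Set.range (M * H)) = Submodule.span R (Set.range H) := by
  have hcomp : (M * H).vecMulLinear = H.vecMulLinear ∘ₗ M.vecMulLinear :=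
    LinearMap.ext fun v => (vecMul_vecMul v M H).symm
  calc Submodule.span R (Set.range (M * H))
      = LinearMap.range (M * H).vecMulLinear := (range_vecMulLinear _).symm
    _ = LinearMap.range H.vecMulLinear := by
      rw [hcomp, LinearMap.range_comp_of_range_eq_top]
      exact LinearMap.range_eq_top.mpr (vecMul_surjective_iff_isUnit.mpr hM)
    _ = Submodule.span R (Set.range H) := range_vecMulLinear _

theorem cyc_eq_permMatrix (k : ℕ) [NeZero k] :
    cyc k = (Equiv.addRight (1 : Fin k)).permMatrix (ZMod 2) := by
  ext i j
  simp [cyc, eq_comm]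

theorem isUnit_xMat (ℓ m : ℕ) [NeZero ℓ] [NeZero m] : IsUnit (xMat ℓ m) :=
  (cyc_eq_permMatrix ℓ ▸ isUnit_permMatrix _).kronecker isUnit_one

theorem isUnit_yMat (ℓ m : ℕ) [NeZero ℓ] [NeZero m] : IsUnit (yMat ℓ m) :=
  isUnit_one.kronecker (cyc_eq_permMatrix m ▸ isUnit_permMatrix _)

theorem self_orthogonal_BB_code_of_monomial_swap_general
    (ℓ m : ℕ) [NeZero ℓ] [NeZero m]
    (A B : Matrix (Fin ℓ × Fin m) (Fin ℓ × Fin m) (ZMod 2))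
    (i j : ℕ)
    (hMA : (xMat ℓ m ^ i * yMat ℓ m ^ j) * A = Bᵀ)
    (hMB : (xMat ℓ m ^ i * yMat ℓ m ^ j) * B = Aᵀ) :
    (xMat ℓ m ^ i * yMat ℓ m ^ j) * Matrix.fromCols A B = Matrix.fromCols Bᵀ Aᵀ ∧
    Submodule.span (ZMod 2) (Set.range (Matrix.fromCols A B)) =
      Submodule.span (ZMod 2) (Set.range (Matrix.fromCols Bᵀ Aᵀ)) := by
  have hswap :
      (xMat ℓ m ^ i * yMat ℓ m ^ j) * Matrix.fromCols A B = Matrix.fromCols Bᵀ Aᵀ := by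
    rw [mul_fromCols, hMA, hMB]
  have hM : IsUnit (xMat ℓ m ^ i * yMat ℓ m ^ j) :=
    ((isUnit_xMat ℓ m).pow i).mul ((isUnit_yMat ℓ m).pow j)
  exact ⟨hswap, by rw [← hswap, span_range_mul_of_isUnit hM]⟩

/-- Over `F₂ = ZMod 2`, let `x = S_ℓ ⊗ I_m` and `y = I_ℓ ⊗ S_m`, and let `A` and `B` each be
a finite sum of monomials `x^a y^b`.  Suppose there exist `i, j` such that the monomial
`M = x^i y^j` satisfies `M·A = Bᵀ` and `M·B = Aᵀ`.  Then `M·[A | B] = [Bᵀ | Aᵀ]`, and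
since `M` is an invertible (permutation) matrix, the `F₂`-row spaces of `H_X = [A | B]`
and `H_Z = [Bᵀ | Aᵀ]` coincide.  Hence the corresponding bivariate bicycle code is
self-orthogonal (its X- and Z-stabilizer spaces are equal). -/
theorem self_orthogonal_BB_code_of_monomial_swap
    (ℓ m : ℕ) [NeZero ℓ] [NeZero m]
    (A B : Matrix (Fin ℓ × Fin m) (Fin ℓ × Fin m) (ZMod 2))
    (sA sB : Finset (ℕ × ℕ))
    (hA : A = ∑ p ∈ sA, xMat ℓ m ^ p.1 * yMat ℓ m ^ p.2)
    (hB : B = ∑ p ∈ sB, xMat ℓ m ^ p.1 * yMat ℓ m ^ p.2)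
    (i j : ℕ)
    (hMA : (xMat ℓ m ^ i * yMat ℓ m ^ j) * A = Bᵀ)
    (hMB : (xMat ℓ m ^ i * yMat ℓ m ^ j) * B = Aᵀ) :
    (xMat ℓ m ^ i * yMat ℓ m ^ j) * Matrix.fromCols A B = Matrix.fromCols Bᵀ Aᵀ ∧
    Submodule.span (ZMod 2) (Set.range (Matrix.fromCols A B)) =
      Submodule.span (ZMod 2) (Set.range (Matrix.fromCols Bᵀ Aᵀ)) :=
  self_orthogonal_BB_code_of_monomial_swap_general ℓ m A B i j hMA hMB
end
end
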